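/- arXiv:2104.07859 — 4 statements merged into one kernel-verified Lean document; each statement's English description precedes it below -/
import Mathlib

section
/- For all complex numbers $w_1$ and $w_2$, $\left|\frac{e^{w_1}-e^{w_2}}{w_1-w_2}\right|^2 \le \frac{(e^{2\,\mathrm{Re}\,w_1}-1)(e^{2\,\mathrm{Re}\,w_2}-1)}{(2\,\mathrm{Re}\,w_1)(2\,\mathrm{Re}\,w_2)}$, where each fraction is interpreted as its limiting value when the denominator is zero. -/
/-!
The divided difference of `exp` is its average over the segment from `w₂` to `w₁`:
`∫₀¹ exp ((1 - t) w₂ + t w₁) dt`. Taking norms, the integrand has modulus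
`e^{t Re w₁} e^{(1 - t) Re w₂}`, and Cauchy–Schwarz on `[0, 1]` bounds the square of its integral by
`∫₀¹ e^{2 t Re w₁} dt · ∫₀¹ e^{2 (1 - t) Re w₂} dt`, which is the right-hand side.
-/
open Real intervalIntegral

theorem sq_integral_mul_le_integral_sq_mul_integral_sq {f g : ℝ → ℝ} {a b : ℝ} (hab : a ≤ b)
    (hf : Continuous f) (hg : Continuous g) :
    (∫ t in a..b, f t * g t) ^ 2 ≤ (∫ t in a..b, f t ^ 2) * ∫ t in a..b, g t ^ 2 := by
  have hquad : ∀ s : ℝ, 0 ≤ (∫ t in a..b, g t ^ 2) * (s * s) + (-2 * ∫ t in a..b, f t * g t) * s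
      + ∫ t in a..b, f t ^ 2 := by
    intro s
    have hexp : ∫ t in a..b, (s * g t - f t) ^ 2 = (∫ t in a..b, g t ^ 2) * (s * s)
        + (-2 * ∫ t in a..b, f t * g t) * s + ∫ t in a..b, f t ^ 2 := by
      have hsq : ∀ t, (s * g t - f t) ^ 2 = (s * s) * g t ^ 2 + (-2 * s) * (f t * g t) + f t ^ 2 :=
        fun t => by ring
      simp_rw [hsq]
      rw [integral_add, integral_add, integral_const_mul, integral_const_mul]
      · ring
      all_goals apply Continuous.intervalIntegrable; fun_prop
    rw [← hexp]
    exact integral_nonneg hab fun t _ => sq_nonneg _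
  have hdiscrim := discrim_le_zero hquad
  rw [discrim] at hdiscrim
  linarith

theorem integral_exp_mul_unitInterval (a : ℝ) :
    ∫ t in (0:ℝ)..1, exp (a * t) = if a = 0 then 1 else (exp a - 1) / a := by
  split_ifs with ha
  · simp [ha]
  · rw [integral_comp_mul_left exp ha, integral_exp]
    simp [div_eq_inv_mul]

theorem integral_exp_mul_sq (x : ℝ) :
    ∫ t in (0:ℝ)..1, exp (x * t) ^ 2 = if x = 0 then 1 else (exp (2 * x) - 1) / (2 * x) := by
  simp_rw [← exp_nat_mul, Nat.cast_ofNat, ← mul_assoc, integral_exp_mul_unitInterval]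
  simp

theorem integral_exp_mul_one_sub_sq (x : ℝ) :
    ∫ t in (0:ℝ)..1, exp (x * (1 - t)) ^ 2 = if x = 0 then 1 else (exp (2 * x) - 1) / (2 * x) := by
  rw [← integral_exp_mul_sq]
  simpa using integral_comp_sub_left (fun t => exp (x * t) ^ 2) (1:ℝ) (a := 0) (b := 1)

theorem ite_exp_sub_div_eq_integral (w₁ w₂ : ℂ) :
    (if w₁ = w₂ then Complex.exp w₁ else (Complex.exp w₁ - Complex.exp w₂) / (w₁ - w₂)) =
      ∫ t in (0:ℝ)..1, Complex.exp ((w₁ - w₂) * t + w₂) := by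
  split_ifs with h
  · simp [h]
  · simp_rw [Complex.exp_add]
    rw [integral_mul_const, integral_exp_mul_complex (sub_ne_zero.mpr h)]
    push_cast
    rw [mul_one, mul_zero, Complex.exp_zero, div_mul_eq_mul_div, sub_mul, one_mul,
      ← Complex.exp_add, sub_add_cancel]

theorem norm_ite_exp_sub_div_le (w₁ w₂ : ℂ) :
    ‖if w₁ = w₂ then Complex.exp w₁ else (Complex.exp w₁ - Complex.exp w₂) / (w₁ - w₂)‖ ≤
      ∫ t in (0:ℝ)..1, exp (w₁.re * t) * exp (w₂.re * (1 - t)) := by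
  rw [ite_exp_sub_div_eq_integral]
  refine (norm_integral_le_integral_norm zero_le_one).trans_eq (integral_congr fun t _ => ?_)
  rw [Complex.norm_exp, ← exp_add]
  congr 1
  simp only [Complex.add_re, Complex.mul_re, Complex.sub_re, Complex.ofReal_re, Complex.sub_im,
    Complex.ofReal_im, mul_zero, sub_zero]
  ring

/-- for all complex `w₁ w₂`,
`|(e^{w₁}-e^{w₂})/(w₁-w₂)|² ≤ ((e^{2 Re w₁}-1)(e^{2 Re w₂}-1))/((2 Re w₁)(2 Re w₂))`,
with each fraction interpreted as its limiting value when the denominator vanishes. -/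
theorem stmt0 (w₁ w₂ : ℂ) :
    ‖(if w₁ = w₂ then Complex.exp w₁
        else (Complex.exp w₁ - Complex.exp w₂) / (w₁ - w₂))‖ ^ 2 ≤
      (if w₁.re = 0 then 1 else (Real.exp (2 * w₁.re) - 1) / (2 * w₁.re)) *
      (if w₂.re = 0 then 1 else (Real.exp (2 * w₂.re) - 1) / (2 * w₂.re)) := by
  rw [← integral_exp_mul_sq, ← integral_exp_mul_one_sub_sq]
  calc _ ≤ (∫ t in (0:ℝ)..1, exp (w₁.re * t) * exp (w₂.re * (1 - t))) ^ 2 :=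
        pow_le_pow_left₀ (norm_nonneg _) (norm_ite_exp_sub_div_le w₁ w₂) 2
    _ ≤ _ := sq_integral_mul_le_integral_sq_mul_integral_sq zero_le_one (by fun_prop) (by fun_prop)
end

section
/- For all complex numbers $b$, $\left|\frac{\sinh b}{b}\right|^2 \le \left(\frac{\sinh(\mathrm{Re}\,b)}{\mathrm{Re}\,b}\right)^2$, with the conventions that $\sinh(z)/z = 1$ at $z=0$; moreover equality holds only if $b$ is real. -/
/-!
Write `b = x + iy`. Since `|sinh b|² = sinh² x + sin² y` and `|b|² = x² + y²`, the claim amounts to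
`sinh² x + sin² y ≤ s² (x² + y²)` with `s = sinh x / x`. Here `s² x² = sinh² x`, while
`sin² y ≤ y² ≤ s² y²` because `s² ≥ 1`; the first of these is strict unless `y = 0`.
-/

noncomputable def Real.sinhc (x : ℝ) : ℝ := if x = 0 then 1 else Real.sinh x / x

noncomputable def Complex.sinhc (z : ℂ) : ℂ := if z = 0 then 1 else Complex.sinh z / z

namespace Real

theorem sinhc_sq_mul_sq (x : ℝ) : sinhc x ^ 2 * x ^ 2 = sinh x ^ 2 := by
  by_cases hx : x = 0
  · simp [hx]
  · rw [sinhc, if_neg hx, div_pow, div_mul_cancel₀ _ (pow_ne_zero 2 hx)]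

theorem sq_le_sinh_sq (x : ℝ) : x ^ 2 ≤ sinh x ^ 2 := by
  rw [← sq_abs, ← sq_abs (sinh x), abs_sinh]
  exact pow_le_pow_left₀ (abs_nonneg x) (self_le_sinh_iff.2 (abs_nonneg x)) 2

theorem one_le_sinhc_sq (x : ℝ) : 1 ≤ sinhc x ^ 2 := by
  by_cases hx : x = 0
  · simp [sinhc, hx]
  · rw [sinhc, if_neg hx, div_pow, one_le_div (by positivity)]
    exact sq_le_sinh_sq x

end Real

namespace Complex

theorem sq_norm_sinh (b : ℂ) : ‖sinh b‖ ^ 2 = Real.sinh b.re ^ 2 + Real.sin b.im ^ 2 := by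
  conv_lhs => rw [← re_add_im b]
  rw [sinh_add, sinh_mul_I, cosh_mul_I, Complex.sq_norm, normSq_apply]
  simp only [add_re, add_im, mul_re, mul_im, I_re, I_im, sinh_ofReal_re, sinh_ofReal_im,
    cosh_ofReal_re, cosh_ofReal_im, sin_ofReal_re, sin_ofReal_im, cos_ofReal_re, cos_ofReal_im]
  nlinarith [Real.sin_sq_add_cos_sq b.im, Real.cosh_sq b.re]

theorem sq_norm_sinhc_mul_sq_norm (b : ℂ) : ‖sinhc b‖ ^ 2 * ‖b‖ ^ 2 = ‖sinh b‖ ^ 2 := by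
  by_cases hb : b = 0
  · simp [hb]
  · rw [sinhc, if_neg hb, norm_div, div_pow, div_mul_cancel₀ _ (by positivity)]

theorem sq_norm_sinh_le (b : ℂ) : ‖sinh b‖ ^ 2 ≤ Real.sinhc b.re ^ 2 * ‖b‖ ^ 2 := by
  have hsin : Real.sin b.im ^ 2 ≤ Real.sinhc b.re ^ 2 * b.im ^ 2 :=
    Real.sin_sq_le_sq.trans (le_mul_of_one_le_left (sq_nonneg _) (Real.one_le_sinhc_sq _))
  rw [sq_norm_sinh, Complex.sq_norm, normSq_apply, mul_add, ← sq, ← sq, Real.sinhc_sq_mul_sq]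
  gcongr

theorem sq_norm_sinh_lt {b : ℂ} (hb : b.im ≠ 0) :
    ‖sinh b‖ ^ 2 < Real.sinhc b.re ^ 2 * ‖b‖ ^ 2 := by
  have hsin : Real.sin b.im ^ 2 < Real.sinhc b.re ^ 2 * b.im ^ 2 :=
    (Real.sin_sq_lt_sq hb).trans_le (le_mul_of_one_le_left (sq_nonneg _) (Real.one_le_sinhc_sq _))
  rw [sq_norm_sinh, Complex.sq_norm, normSq_apply, mul_add, ← sq, ← sq, Real.sinhc_sq_mul_sq]
  gcongr

theorem sq_norm_sinhc_le (b : ℂ) : ‖sinhc b‖ ^ 2 ≤ Real.sinhc b.re ^ 2 := by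
  by_cases hb : b = 0
  · simp [sinhc, Real.sinhc, hb]
  · have hpos : 0 < ‖b‖ ^ 2 := by positivity
    rw [← mul_le_mul_iff_left₀ hpos, sq_norm_sinhc_mul_sq_norm]
    exact sq_norm_sinh_le b

theorem sq_norm_sinhc_lt {b : ℂ} (hb : b.im ≠ 0) : ‖sinhc b‖ ^ 2 < Real.sinhc b.re ^ 2 := by
  have hpos : 0 < ‖b‖ ^ 2 := by
    have : b ≠ 0 := fun h => hb (by simp [h])
    positivity
  rw [← mul_lt_mul_iff_left₀ hpos, sq_norm_sinhc_mul_sq_norm]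
  exact sq_norm_sinh_lt hb

end Complex

/-- `|sinh b / b|² ≤ (sinh(Re b)/(Re b))²` with the convention
`sinh z / z = 1` at `z = 0`, and equality holds only if `b` is real. -/
theorem stmt1 (b : ℂ) :
    ‖(if b = 0 then (1 : ℂ) else Complex.sinh b / b)‖ ^ 2 ≤
      (if b.re = 0 then 1 else Real.sinh b.re / b.re) ^ 2 ∧
    (‖(if b = 0 then (1 : ℂ) else Complex.sinh b / b)‖ ^ 2 =
      (if b.re = 0 then 1 else Real.sinh b.re / b.re) ^ 2 → b.im = 0) := by
  change ‖Complex.sinhc b‖ ^ 2 ≤ Real.sinhc b.re ^ 2 ∧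
    (‖Complex.sinhc b‖ ^ 2 = Real.sinhc b.re ^ 2 → b.im = 0)
  refine ⟨Complex.sq_norm_sinhc_le b, fun heq => ?_⟩
  by_contra hb
  exact (Complex.sq_norm_sinhc_lt hb).ne heq
end

section
/- The function $x \mapsto \log(\sinh(x)/x)$ is strictly convex on the real line (with the value at $0$ given by the limit $\log 1 = 0$); consequently, for all real $u, v$, $\frac{\sinh^2((u+v)/2)}{((u+v)/2)^2} \le \frac{\sinh u}{u}\cdot\frac{\sinh v}{v}$, with equality only when $u = v$. -/
open Real Set

noncomputable def myF : ℝ → ℝ := fun x : ℝ => Real.log (if x = 0 then 1 else Real.sinh x / x)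

noncomputable def myPhi : ℝ → ℝ := fun x : ℝ =>
  if x = 0 then 0 else Real.cosh x / Real.sinh x - x⁻¹

lemma g_ge_one (x : ℝ) : (1 : ℝ) ≤ (if x = 0 then 1 else Real.sinh x / x) := by
  rcases eq_or_ne x 0 with h | h
  · simp [h]
  rw [if_neg h]
  rcases lt_or_gt_of_ne h with hx | hx
  · have h1 : Real.sinh x < x := by simpa using Real.sinh_lt_sinh.2 hx
    rw [le_div_iff_of_neg hx]
    nlinarith [Real.self_lt_sinh_iff (x := x)]
  · have h1 : x < Real.sinh x := Real.self_lt_sinh_iff.2 hx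
    rw [le_div_iff₀ hx]; linarith

lemma g_pos (x : ℝ) : (0 : ℝ) < (if x = 0 then 1 else Real.sinh x / x) :=
  lt_of_lt_of_le one_pos (g_ge_one x)

lemma myF_nonneg (x : ℝ) : 0 ≤ myF x :=
  Real.log_nonneg (g_ge_one x)

/-- key inequality: `sinh x < x * cosh x` for `x > 0`. -/
lemma sinh_lt_mul_cosh {x : ℝ} (hx : 0 < x) : Real.sinh x < x * Real.cosh x := by
  have key : StrictMonoOn (fun y : ℝ => y * Real.cosh y - Real.sinh y) (Ici 0) := by
    apply strictMonoOn_of_deriv_pos (convex_Ici 0)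
    · exact ((continuous_id.mul Real.continuous_cosh).sub Real.continuous_sinh).continuousOn
    · intro y hy
      rw [interior_Ici] at hy
      have hd : HasDerivAt (fun y : ℝ => y * Real.cosh y - Real.sinh y)
          (1 * Real.cosh y + y * Real.sinh y - Real.cosh y) y :=
        ((hasDerivAt_id y).mul (Real.hasDerivAt_cosh y)).sub (Real.hasDerivAt_sinh y)
      rw [hd.deriv]
      have h1 : 0 < Real.sinh y := Real.sinh_pos_iff.2 hy
      have h2 : (0:ℝ) < y := hy
      nlinarith [mul_pos h2 h1]
  have := key (self_mem_Ici) (le_of_lt hx) hx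
  simp only [Real.cosh_zero, Real.sinh_zero, mul_one, zero_mul, sub_zero] at this
  linarith

lemma phi_pos {x : ℝ} (hx : 0 < x) : 0 < myPhi x := by
  have hs : 0 < Real.sinh x := Real.sinh_pos_iff.2 hx
  have h := sinh_lt_mul_cosh hx
  rw [myPhi, if_neg hx.ne', sub_pos, ← one_div, div_lt_div_iff₀ hx hs]
  nlinarith

lemma phi_odd (x : ℝ) : myPhi (-x) = -myPhi x := by
  rcases eq_or_ne x 0 with h | h
  · simp [h, myPhi]
  · rw [myPhi, myPhi, if_neg (neg_ne_zero.2 h), if_neg h]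
    simp [Real.cosh_neg, Real.sinh_neg, div_neg]
    ring

lemma phi_strictMonoOn_pos : StrictMonoOn myPhi (Ioi 0) := by
  have key : StrictMonoOn (fun y : ℝ => Real.cosh y / Real.sinh y - y⁻¹) (Ioi 0) := by
    apply strictMonoOn_of_deriv_pos (convex_Ioi 0)
    · apply ContinuousOn.sub
      · exact Real.continuous_cosh.continuousOn.div Real.continuous_sinh.continuousOn
          (fun y hy => (Real.sinh_ne_zero).2 (ne_of_gt hy))
      · exact continuousOn_inv₀.mono (fun y hy => ne_of_gt hy)
    · intro y hy
      rw [interior_Ioi] at hy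
      have hy0 : y ≠ 0 := ne_of_gt hy
      have hs : Real.sinh y ≠ 0 := Real.sinh_ne_zero.2 hy0
      have hd : HasDerivAt (fun y : ℝ => Real.cosh y / Real.sinh y - y⁻¹)
          ((Real.sinh y * Real.sinh y - Real.cosh y * Real.cosh y) / (Real.sinh y) ^ 2
            - (-(y ^ 2)⁻¹)) y :=
        ((Real.hasDerivAt_cosh y).div (Real.hasDerivAt_sinh y) hs).sub (hasDerivAt_inv hy0)
      rw [hd.deriv]
      have hsy : y < Real.sinh y := Real.self_lt_sinh_iff.2 hy
      have hsq : Real.cosh y ^ 2 - Real.sinh y ^ 2 = 1 := Real.cosh_sq_sub_sinh_sq y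
      have h1 : (Real.sinh y * Real.sinh y - Real.cosh y * Real.cosh y) / (Real.sinh y) ^ 2
          = -((Real.sinh y) ^ 2)⁻¹ := by
        field_simp
        nlinarith
      rw [h1]
      have hsp : 0 < Real.sinh y := Real.sinh_pos_iff.2 hy
      have hyp : (0 : ℝ) < y := hy
      have h2 : ((Real.sinh y) ^ 2)⁻¹ < (y ^ 2)⁻¹ := by
        apply inv_strictAnti₀ (by positivity)
        nlinarith [mul_lt_mul_of_pos_left hsy hsp, mul_lt_mul_of_pos_right hsy hyp]
      linarith
  intro a ha b hb hab
  have ea : myPhi a = Real.cosh a / Real.sinh a - a⁻¹ := by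
    rw [myPhi, if_neg (ne_of_gt ha)]
  have eb : myPhi b = Real.cosh b / Real.sinh b - b⁻¹ := by
    rw [myPhi, if_neg (ne_of_gt hb)]
  rw [ea, eb]; exact key ha hb hab

lemma phi_strictMono : StrictMono myPhi := by
  intro a b hab
  rcases lt_trichotomy a 0 with ha | ha | ha
  · rcases lt_trichotomy b 0 with hb | hb | hb
    · have : myPhi (-b) < myPhi (-a) :=
        phi_strictMonoOn_pos (by simpa using hb) (by simpa using ha) (by linarith)
      rw [phi_odd, phi_odd] at this; linarith
    · have h1 : 0 < myPhi (-a) := phi_pos (by linarith)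
      rw [phi_odd] at h1
      have h0 : myPhi 0 = 0 := by simp [myPhi]
      rw [hb, h0]; linarith
    · have h1 : 0 < myPhi (-a) := phi_pos (by linarith)
      rw [phi_odd] at h1
      have h2 : 0 < myPhi b := phi_pos hb
      linarith
  · subst ha
    have : 0 < b := hab
    simpa [myPhi] using phi_pos this
  · exact phi_strictMonoOn_pos (mem_Ioi.2 ha) (mem_Ioi.2 (lt_trans ha hab)) hab

lemma myF_eventually_eq {x : ℝ} (hx : x ≠ 0) :
    myF =ᶠ[nhds x] fun y => Real.log (Real.sinh y) - Real.log y := by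
  have : ∀ᶠ y in nhds x, y ≠ 0 := eventually_ne_nhds hx
  filter_upwards [this] with y hy
  rw [myF, if_neg hy, Real.log_div (Real.sinh_ne_zero.2 hy) hy]

lemma myF_hasDerivAt_ne {x : ℝ} (hx : x ≠ 0) : HasDerivAt myF (myPhi x) x := by
  have hs : Real.sinh x ≠ 0 := Real.sinh_ne_zero.2 hx
  have h1 : HasDerivAt (fun y => Real.log (Real.sinh y) - Real.log y)
      (Real.cosh x / Real.sinh x - x⁻¹) x :=
    ((Real.hasDerivAt_sinh x).log hs).sub (Real.hasDerivAt_log hx)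
  have h2 : myPhi x = Real.cosh x / Real.sinh x - x⁻¹ := by rw [myPhi, if_neg hx]
  rw [h2]
  exact h1.congr_of_eventuallyEq (myF_eventually_eq hx)

lemma myF_hasDerivAt_zero : HasDerivAt myF 0 0 := by
  rw [hasDerivAt_iff_tendsto_slope]
  have hF0 : myF 0 = 0 := by simp [myF]
  have hb : ∀ x : ℝ, x ≠ 0 → ‖slope myF 0 x‖ ≤ ‖slope Real.cosh 0 x‖ := by
    intro x hx
    have hupper : myF x ≤ Real.cosh x - 1 := by
      have hgc : (if x = 0 then 1 else Real.sinh x / x) ≤ Real.cosh x := by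
        rw [if_neg hx]
        rcases lt_or_gt_of_ne hx with h | h
        · rw [div_le_iff_of_neg h]
          nlinarith [sinh_lt_mul_cosh (show (0:ℝ) < -x by linarith),
            Real.sinh_neg x, Real.cosh_neg x]
        · rw [div_le_iff₀ h]
          nlinarith [sinh_lt_mul_cosh h]
      calc myF x ≤ (if x = 0 then 1 else Real.sinh x / x) - 1 :=
            Real.log_le_sub_one_of_pos (g_pos x)
        _ ≤ Real.cosh x - 1 := by linarith
    have hlow : 0 ≤ myF x := myF_nonneg x
    have e1 : slope myF 0 x = myF x / x := by
      rw [slope_def_field, hF0]; ring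
    have e2 : slope Real.cosh 0 x = (Real.cosh x - 1) / x := by
      rw [slope_def_field, Real.cosh_zero]; ring
    have hnum : |myF x| ≤ |Real.cosh x - 1| := by
      rw [abs_of_nonneg hlow, abs_of_nonneg (by nlinarith [Real.one_le_cosh x])]
      linarith
    rw [e1, e2, Real.norm_eq_abs, Real.norm_eq_abs, abs_div, abs_div]
    gcongr
    all_goals exact hnum
  have hcosh : Filter.Tendsto (slope Real.cosh 0) (nhdsWithin 0 {0}ᶜ) (nhds 0) := by
    have := hasDerivAt_iff_tendsto_slope.1 (Real.hasDerivAt_cosh 0)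
    rwa [Real.sinh_zero] at this
  have hcoshnorm : Filter.Tendsto (fun x => ‖slope Real.cosh 0 x‖) (nhdsWithin 0 {0}ᶜ)
      (nhds 0) := by
    have := hcosh.norm
    rwa [norm_zero] at this
  apply squeeze_zero_norm' ?_ hcoshnorm
  filter_upwards [self_mem_nhdsWithin] with x hx
  exact hb x hx

lemma myF_deriv : deriv myF = myPhi := by
  funext x
  rcases eq_or_ne x 0 with h | h
  · rw [h, myF_hasDerivAt_zero.deriv]; simp [myPhi]
  · exact (myF_hasDerivAt_ne h).deriv

lemma myF_strictConvex : StrictConvexOn ℝ Set.univ myF := by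
  have hcont : Continuous myF := by
    rw [continuous_iff_continuousAt]
    intro x
    rcases eq_or_ne x 0 with h | h
    · rw [h]; exact myF_hasDerivAt_zero.continuousAt
    · exact (myF_hasDerivAt_ne h).continuousAt
  have := StrictMonoOn.strictConvexOn_of_deriv convex_univ hcont.continuousOn ?_
  · exact this
  · rw [interior_univ, myF_deriv]
    exact phi_strictMono.strictMonoOn _

lemma core_lt {u v : ℝ} (huv : u ≠ v) :
    (if (u + v) / 2 = 0 then 1 else Real.sinh ((u + v) / 2) / ((u + v) / 2)) ^ 2 <
      (if u = 0 then 1 else Real.sinh u / u) * (if v = 0 then 1 else Real.sinh v / v) := by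
  have h := myF_strictConvex.2 (mem_univ u) (mem_univ v) huv
    (by norm_num : (0:ℝ) < 1/2) (by norm_num : (0:ℝ) < 1/2) (by norm_num)
  have he : (1/2 : ℝ) • u + (1/2 : ℝ) • v = (u + v) / 2 := by
    simp [smul_eq_mul]; ring
  rw [he] at h
  set A := (if (u + v) / 2 = 0 then 1 else Real.sinh ((u + v) / 2) / ((u + v) / 2)) with hA
  set B := (if u = 0 then 1 else Real.sinh u / u) with hB
  set C := (if v = 0 then 1 else Real.sinh v / v) with hC
  have hApos : 0 < A := g_pos _
  have hBpos : 0 < B := g_pos _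
  have hCpos : 0 < C := g_pos _
  have h2 : Real.log A < (Real.log B + Real.log C) / 2 := by
    have : myF ((u+v)/2) = Real.log A := rfl
    rw [this] at h
    have hu : myF u = Real.log B := rfl
    have hv : myF v = Real.log C := rfl
    rw [hu, hv] at h
    simp only [smul_eq_mul] at h
    linarith
  have h3 : Real.log (A ^ 2) < Real.log (B * C) := by
    rw [Real.log_pow, Real.log_mul (ne_of_gt hBpos) (ne_of_gt hCpos)]
    push_cast
    linarith
  exact (Real.log_lt_log_iff (by positivity) (by positivity)).1 h3

/-- `x ↦ log(sinh x / x)` (with value `0` at `x = 0`) is strictly convex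
on ℝ; consequently `sinh²((u+v)/2)/((u+v)/2)² ≤ (sinh u / u)·(sinh v / v)` for all
real `u, v`, with equality only when `u = v`. -/
theorem stmt3 :
    StrictConvexOn ℝ Set.univ
      (fun x : ℝ => Real.log (if x = 0 then 1 else Real.sinh x / x)) ∧
    ∀ u v : ℝ,
      (if (u + v) / 2 = 0 then 1 else Real.sinh ((u + v) / 2) / ((u + v) / 2)) ^ 2 ≤
        (if u = 0 then 1 else Real.sinh u / u) *
        (if v = 0 then 1 else Real.sinh v / v) ∧
      ((if (u + v) / 2 = 0 then 1 else Real.sinh ((u + v) / 2) / ((u + v) / 2)) ^ 2 =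
        (if u = 0 then 1 else Real.sinh u / u) *
        (if v = 0 then 1 else Real.sinh v / v) → u = v) := by
  constructor
  · exact myF_strictConvex
  · intro u v
    rcases eq_or_ne u v with huv | huv
    · subst huv
      have he : (u + u) / 2 = u := by ring
      rw [he]
      exact ⟨le_of_eq (by rw [sq]), fun _ => rfl⟩
    · have h := core_lt huv
      exact ⟨le_of_lt h, fun heq => absurd heq (ne_of_lt h)⟩
end

section
/- Suppose $D_1$ and $D_2$ are closed topological disks in $\mathbb{C}$ and $f$ is an injective continuous map of $D_1$ into $\mathbb{C}$ that maps at least one interior point of $D_1$ into the interior of $D_2$ and maps the boundary of $D_1$ homeomorphically onto the boundary of $D_2$. Then $f(D_1) \subseteq D_2$ and $f$ is a homeomorphism of $D_1$ onto $D_2$. -/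
/-
Invariance of domain in ℂ, proved with continuous logarithms: a nonvanishing map on a disk has
one, having one survives homotopies through nonvanishing maps (homotopy lifting for `exp`), and
an odd map on the circle has none. If an injective `φ` on a closed disk missed a point `a` close to
`φ x₀`, then `φ - a` would have a logarithm on the boundary circle; deforming it first into
`φ - φ x₀` and then through `φ z - φ (x₀ + t (x₀ - z))` into an odd function gives a contradiction.

Consequently `f (int D₁)` and `int D₂` are connected open sets; they meet and have the same
frontier `f (∂D₁) = ∂D₂`, so they coincide. Taking closures gives `f D₁ = D₂`, and a continuous
bijection from a compact space to a Hausdorff one is a homeomorphism.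
-/

open Complex Metric Set
open scoped Real

/-- A closed topological disk in ℂ: a set homeomorphic to the closed unit disk. -/
def IsClosedTopologicalDisk (D : Set ℂ) : Prop :=
  Nonempty (D ≃ₜ (Metric.closedBall (0 : ℂ) 1))

def HasContinuousLogOn {X : Type*} [TopologicalSpace X] (g : X → ℂ) (s : Set X) : Prop :=
  ∃ θ : X → ℂ, ContinuousOn θ s ∧ ∀ x ∈ s, exp (θ x) = g x

theorem HasContinuousLogOn.of_homotopy {X : Type*} [TopologicalSpace X] {s : Set X}
    {H : X × ℝ → ℂ} (hH : ContinuousOn H (s ×ˢ Icc 0 1))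
    (hne : ∀ p ∈ s ×ˢ Icc (0 : ℝ) 1, H p ≠ 0)
    (h₀ : HasContinuousLogOn (fun x ↦ H (x, 0)) s) :
    HasContinuousLogOn (fun x ↦ H (x, 1)) s := by
  classical
  obtain ⟨θ, hθ, hθH⟩ := h₀
  let H' : C(unitInterval × s, {z : ℂ // z ≠ 0}) :=
    ⟨fun p ↦ ⟨H (p.2, p.1), hne _ ⟨p.2.2, p.1.2⟩⟩,
      (hH.comp_continuous (by fun_prop) fun p ↦ ⟨p.2.2, p.1.2⟩).subtype_mk _⟩
  let θ' : C(s, ℂ) := ⟨s.domRestrict θ, hθ.domRestrict⟩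
  have hH'θ' : ∀ x, H' (0, x) = ⟨exp (θ' x), exp_ne_zero _⟩ :=
    fun x ↦ Subtype.ext (hθH x x.2).symm
  let L := isCoveringMap_exp.liftHomotopy H' θ' hH'θ'
  refine ⟨fun x ↦ if hx : x ∈ s then L (1, ⟨x, hx⟩) else 0, ?_, fun x hx ↦ ?_⟩
  · rw [continuousOn_iff_continuous_domRestrict]
    convert L.continuous.comp
      ((continuous_const (y := (1 : unitInterval))).prodMk continuous_id) using 1
    ext x
    simp [x.2]
  · simpa [hx, L, H'] using congr_arg Subtype.val
      (congr_fun (isCoveringMap_exp.liftHomotopy_lifts H' θ' hH'θ') (1, ⟨x, hx⟩))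

theorem HasContinuousLogOn.mono {X : Type*} [TopologicalSpace X] {g : X → ℂ} {s t : Set X}
    (hg : HasContinuousLogOn g t) (hst : s ⊆ t) : HasContinuousLogOn g s :=
  let ⟨θ, hθ, hθg⟩ := hg
  ⟨θ, hθ.mono hst, fun x hx ↦ hθg x (hst hx)⟩

theorem HasContinuousLogOn.congr {X : Type*} [TopologicalSpace X] {g g' : X → ℂ} {s : Set X}
    (hg : HasContinuousLogOn g s) (hgg' : EqOn g g' s) : HasContinuousLogOn g' s :=
  let ⟨θ, hθ, hθg⟩ := hg
  ⟨θ, hθ, fun x hx ↦ (hθg x hx).trans (hgg' hx)⟩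

theorem HasContinuousLogOn.comp {X Y : Type*} [TopologicalSpace X] [TopologicalSpace Y]
    {g : Y → ℂ} {t : Set Y} (hg : HasContinuousLogOn g t) {m : X → Y} {s : Set X}
    (hm : ContinuousOn m s) (hmt : MapsTo m s t) : HasContinuousLogOn (g ∘ m) s :=
  let ⟨θ, hθ, hθg⟩ := hg
  ⟨θ ∘ m, hθ.comp hm hmt, fun _ hx ↦ hθg _ (hmt hx)⟩

theorem StarConvex.hasContinuousLogOn {E : Type*} [AddCommGroup E] [Module ℝ E]
    [TopologicalSpace E] [IsTopologicalAddGroup E] [ContinuousSMul ℝ E] {s : Set E} {x₀ : E}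
    (hs : StarConvex ℝ x₀ s) {g : E → ℂ} (hg : ContinuousOn g s) (hne : ∀ x ∈ s, g x ≠ 0) :
    HasContinuousLogOn g s := by
  rcases s.eq_empty_or_nonempty with rfl | hsne
  · exact ⟨0, continuousOn_empty _, fun _ ↦ False.elim⟩
  have hmaps : MapsTo (fun p : E × ℝ ↦ x₀ + p.2 • (p.1 - x₀)) (s ×ˢ Icc 0 1) s :=
    fun p hp ↦ hs.add_smul_sub_mem hp.1 hp.2.1 hp.2.2
  have := HasContinuousLogOn.of_homotopy (hg.comp (by fun_prop) hmaps)
    (fun p hp ↦ hne _ (hmaps hp))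
    ⟨fun _ ↦ log (g x₀), continuousOn_const,
      fun _ _ ↦ by simpa using exp_log (hne _ (hs.mem hsne))⟩
  simpa using this

theorem not_hasContinuousLogOn_sphere_of_odd {g : ℂ → ℂ}
    (hodd : ∀ w ∈ sphere (0 : ℂ) 1, g (-w) = -g w) : ¬ HasContinuousLogOn g (sphere 0 1) := by
  rintro ⟨θ, hθ, hθg⟩
  set c : ℝ → ℂ := fun t ↦ exp (t * (2 * π * I))
  have hc : ∀ t, c t ∈ sphere (0 : ℂ) 1 := fun t ↦ by
    simp [c, norm_exp]
  have hc_cont : Continuous c := by fun_prop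
  have hc_half : ∀ t : ℝ, c (t + 1 / 2) = -c t := fun t ↦ by
    simp only [c]
    rw [← neg_one_mul, ← exp_pi_mul_I, ← exp_add]
    congr 1
    push_cast
    ring
  have hc_one : c 1 = c 0 := by simp [c]
  -- `θ` jumps by `πi` modulo `2πi` over each half turn; the jump is locally constant, so the two
  -- half turns add up to an odd multiple of `πi`, while the full turn must give `0`.
  set d : ℝ → ℂ := fun t ↦ θ (c (t + 1 / 2)) - θ (c t) - π * I
  have hd : MapsTo d univ (AddSubgroup.zmultiples (2 * π * I)) := fun t _ ↦ by
    have hne : g (c t) ≠ 0 := hθg _ (hc t) ▸ exp_ne_zero _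
    have h_half : exp (θ (c (t + 1 / 2))) = -g (c t) := by
      rw [hθg _ (hc _), hc_half, hodd _ (hc t)]
    obtain ⟨n, hn⟩ := exp_eq_one_iff.mp (show exp (d t) = 1 by
      simp only [d, exp_sub, h_half, hθg _ (hc t), exp_pi_mul_I]
      field_simp)
    exact ⟨n, by simp [hn]⟩
  have hd_cont : Continuous d := by
    have hθc : Continuous (θ ∘ c) := hθ.comp_continuous hc_cont hc
    exact ((hθc.comp (continuous_add_const _)).sub hθc).sub continuous_const
  have hd_const := isPreconnected_univ.constant_of_mapsTo
    (isDiscrete_iff_discreteTopology.mpr (NormedSpace.discreteTopology_zmultiples _))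
    hd_cont.continuousOn hd (mem_univ 0) (mem_univ (1 / 2))
  obtain ⟨n, hn⟩ := hd (mem_univ 0)
  have : ((2 * n + 1 : ℤ) : ℂ) * (π * I) = 0 := by
    simp only [d] at hd_const hn
    norm_num at hd_const hn
    rw [hc_one] at hd_const
    push_cast
    linear_combination hn + hd_const / 2
  have hodd_zero : 2 * n + 1 = 0 := by
    exact_mod_cast (mul_eq_zero.mp this).resolve_right (by simp [Real.pi_ne_zero, I_ne_zero])
  omega

theorem not_hasContinuousLogOn_sphere_sub_of_injOn {φ : ℂ → ℂ} {x₀ : ℂ} {r : ℝ} (hr : 0 < r)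
    (hφ : ContinuousOn φ (closedBall x₀ r)) (hinj : InjOn φ (closedBall x₀ r)) :
    ¬ HasContinuousLogOn (fun z ↦ φ z - φ x₀) (sphere x₀ r) := by
  intro hlog
  set ρ : ℂ × ℝ → ℂ := fun p ↦ x₀ + p.2 • (x₀ - p.1)
  have hρ : MapsTo ρ (sphere x₀ r ×ˢ Icc 0 1) (closedBall x₀ r) := by
    rintro ⟨z, t⟩ ⟨hz, ht₀, ht₁⟩
    rw [mem_sphere_iff_norm] at hz
    rw [mem_closedBall_iff_norm]
    simp only [ρ, add_sub_cancel_left, norm_smul, Real.norm_eq_abs, abs_of_nonneg ht₀,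
      norm_sub_rev x₀, hz]
    nlinarith
  have hne : ∀ p ∈ sphere x₀ r ×ˢ Icc (0 : ℝ) 1, φ p.1 - φ (ρ p) ≠ 0 := by
    rintro ⟨z, t⟩ hp h
    have hzρ : z = x₀ + t • (x₀ - z) :=
      hinj (sphere_subset_closedBall hp.1) (hρ hp) (sub_eq_zero.mp h)
    have hz : (1 + t) • (z - x₀) = 0 := by linear_combination (norm := module) hzρ
    rw [smul_eq_zero, sub_eq_zero] at hz
    have := hp.1
    rcases hz with ht | rfl
    · linarith [hp.2.1]
    · simp [hr.ne] at this
  have hH : ContinuousOn (fun p : ℂ × ℝ ↦ φ p.1 - φ (ρ p)) (sphere x₀ r ×ˢ Icc 0 1) :=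
    (hφ.comp continuousOn_fst fun p hp ↦ sphere_subset_closedBall hp.1).sub
      (hφ.comp (by fun_prop) hρ)
  have hlog₁ := HasContinuousLogOn.of_homotopy hH hne (hlog.congr fun z _ ↦ by simp [ρ])
  have hm : MapsTo (fun w : ℂ ↦ x₀ + r • w) (sphere 0 1) (sphere x₀ r) := fun w hw ↦ by
    simp_all [abs_of_pos hr]
  refine not_hasContinuousLogOn_sphere_of_odd (fun w _ ↦ ?_) (hlog₁.comp (by fun_prop) hm)
  simp only [Function.comp, ρ, smul_neg, one_smul]
  ring_nf

theorem exists_ball_subset_image_closedBall {φ : ℂ → ℂ} {x₀ : ℂ} {r : ℝ} (hr : 0 < r)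
    (hφ : ContinuousOn φ (closedBall x₀ r)) (hinj : InjOn φ (closedBall x₀ r)) :
    ∃ d > 0, ball (φ x₀) d ⊆ φ '' closedBall x₀ r := by
  have hΓ : IsClosed (φ '' sphere x₀ r) :=
    ((isCompact_sphere x₀ r).image_of_continuousOn (hφ.mono sphere_subset_closedBall)).isClosed
  have hx₀ : φ x₀ ∉ φ '' sphere x₀ r := by
    rintro ⟨z, hz, hzx⟩
    rw [hinj (sphere_subset_closedBall hz) (mem_closedBall_self hr.le) hzx] at hz
    simp [hr.ne] at hz
  obtain ⟨d, hd, hdΓ⟩ := Metric.isOpen_iff.mp hΓ.isOpen_compl _ hx₀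
  refine ⟨d, hd, fun a ha ↦ by_contra fun ha' ↦ ?_⟩
  have hlog : HasContinuousLogOn (fun z ↦ φ z - a) (sphere x₀ r) :=
    ((convex_closedBall x₀ r).starConvex (mem_closedBall_self hr.le)).hasContinuousLogOn
      (hφ.sub continuousOn_const)
      (fun z hz h ↦ ha' ⟨z, hz, sub_eq_zero.mp h⟩) |>.mono sphere_subset_closedBall
  have hseg : ∀ t ∈ Icc (0 : ℝ) 1, a + t • (φ x₀ - a) ∈ ball (φ x₀) d := fun t ht ↦
    (convex_ball _ _).add_smul_sub_mem ha (mem_ball_self hd) ht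
  have hne : ∀ p ∈ sphere x₀ r ×ˢ Icc (0 : ℝ) 1, φ p.1 - (a + p.2 • (φ x₀ - a)) ≠ 0 :=
    fun p hp h ↦ hdΓ (hseg p.2 hp.2) ⟨p.1, hp.1, sub_eq_zero.mp h⟩
  refine not_hasContinuousLogOn_sphere_sub_of_injOn hr hφ hinj ?_
  refine (HasContinuousLogOn.of_homotopy ?_ hne (hlog.congr fun z _ ↦ by simp)).congr
    fun z _ ↦ by simp
  exact (hφ.comp continuousOn_fst fun p hp ↦ sphere_subset_closedBall hp.1).sub (by fun_prop)

theorem isOpen_image_of_continuousOn_of_injOn {φ : ℂ → ℂ} {U : Set ℂ} (hU : IsOpen U)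
    (hφ : ContinuousOn φ U) (hinj : InjOn φ U) : IsOpen (φ '' U) := by
  rw [Metric.isOpen_iff]
  rintro _ ⟨x, hx, rfl⟩
  obtain ⟨r, hr, hrU⟩ := Metric.isOpen_iff.mp hU x hx
  have hsub : closedBall x (r / 2) ⊆ U := (closedBall_subset_ball (by linarith)).trans hrU
  obtain ⟨d, hd, hdsub⟩ :=
    exists_ball_subset_image_closedBall (by positivity) (hφ.mono hsub) (hinj.mono hsub)
  exact ⟨d, hd, hdsub.trans (image_mono hsub)⟩

theorem closure_image_eq_image_of_closure_eq {X Y : Type*} [TopologicalSpace X]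
    [TopologicalSpace Y] [T2Space Y] {s K : Set X} (hK : IsCompact K) (hsK : closure s = K)
    {f : X → Y} (hf : ContinuousOn f K) : closure (f '' s) = f '' K := by
  subst hsK
  exact (image_closure_of_isCompact hK hf).symm

theorem image_interior_subset_interior_of_injOn {φ : ℂ → ℂ} {A B : Set ℂ}
    (hφ : ContinuousOn φ A) (hinj : InjOn φ A) (hAB : MapsTo φ A B) :
    φ '' interior A ⊆ interior B :=
  interior_maximal ((image_mono interior_subset).trans hAB.image_subset)
    (isOpen_image_of_continuousOn_of_injOn isOpen_interior (hφ.mono interior_subset)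
      (hinj.mono interior_subset))

theorem Homeomorph.exists_extension {X Y : Type*} [TopologicalSpace X] [TopologicalSpace Y]
    [Nonempty Y] {A : Set X} {B : Set Y} (h : A ≃ₜ B) :
    ∃ φ : X → Y, ContinuousOn φ A ∧ InjOn φ A ∧ ∀ x : A, φ x = h x := by
  classical
  set φ := Function.extend Subtype.val (fun x : A ↦ (h x : Y)) fun _ ↦ Classical.arbitrary Y
  have hφ : ∀ x : A, φ x = h x := Subtype.val_injective.extend_apply _ _
  refine ⟨φ, ?_, fun x hx y hy hxy ↦ ?_, hφ⟩
  · rw [continuousOn_iff_continuous_domRestrict]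
    convert continuous_subtype_val.comp h.continuous using 1
    exact funext hφ
  · have := h.injective (Subtype.ext <| (hφ ⟨x, hx⟩).symm.trans (hxy.trans (hφ ⟨y, hy⟩)))
    exact congr_arg Subtype.val this

namespace IsClosedTopologicalDisk

variable {D : Set ℂ}

theorem exists_parametrization (hD : IsClosedTopologicalDisk D) :
    ∃ ψ : ℂ → ℂ, ContinuousOn ψ (closedBall 0 1) ∧ ψ '' closedBall 0 1 = D ∧
      ψ '' ball 0 1 = interior D := by
  obtain ⟨h⟩ := hD
  obtain ⟨φ, hφ, hφinj, hφh⟩ := h.exists_extension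
  obtain ⟨ψ, hψ, hψinj, hψh⟩ := h.symm.exists_extension
  have hφD : MapsTo φ D (closedBall 0 1) := fun x hx ↦ hφh ⟨x, hx⟩ ▸ (h ⟨x, hx⟩).2
  have hψB : MapsTo ψ (closedBall 0 1) D := fun w hw ↦ hψh ⟨w, hw⟩ ▸ (h.symm ⟨w, hw⟩).2
  have hψφ : ∀ x ∈ D, ψ (φ x) = x := fun x hx ↦ by
    rw [hφh ⟨x, hx⟩, hψh, Homeomorph.symm_apply_apply]
  have hball : interior (closedBall (0 : ℂ) 1) = ball 0 1 := interior_closedBall 0 one_ne_zero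
  refine ⟨ψ, hψ, hψB.image_subset.antisymm fun x hx ↦ ⟨φ x, hφD hx, hψφ x hx⟩,
    (hball ▸ image_interior_subset_interior_of_injOn hψ hψinj hψB).antisymm fun x hx ↦ ?_⟩
  have := image_interior_subset_interior_of_injOn hφ hφinj hφD ⟨x, hx, rfl⟩
  exact ⟨φ x, hball ▸ this, hψφ x (interior_subset hx)⟩

theorem isCompact (hD : IsClosedTopologicalDisk D) : IsCompact D := by
  obtain ⟨ψ, hψ, hψD, -⟩ := hD.exists_parametrization
  exact hψD ▸ (isCompact_closedBall 0 1).image_of_continuousOn hψ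

theorem closure_interior (hD : IsClosedTopologicalDisk D) : closure (interior D) = D := by
  obtain ⟨ψ, hψ, hψD, hψint⟩ := hD.exists_parametrization
  rw [← hψint, ← hψD]
  exact closure_image_eq_image_of_closure_eq (isCompact_closedBall 0 1)
    (closure_ball 0 one_ne_zero) hψ

theorem isPreconnected_interior (hD : IsClosedTopologicalDisk D) :
    IsPreconnected (interior D) := by
  obtain ⟨ψ, hψ, -, hψint⟩ := hD.exists_parametrization
  exact hψint ▸ (convex_ball 0 1).isPreconnected.image ψ (hψ.mono ball_subset_closedBall)

end IsClosedTopologicalDisk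

theorem IsOpen.eq_of_frontier_eq {X : Type*} [TopologicalSpace X] {U V : Set X}
    (hU : IsOpen U) (hV : IsOpen V) (hUc : IsPreconnected U) (hVc : IsPreconnected V)
    (hfr : frontier U = frontier V) (hUV : (U ∩ V).Nonempty) : U = V := by
  have key : ∀ {U V : Set X}, IsOpen U → IsOpen V → IsPreconnected U →
      frontier U = frontier V → (U ∩ V).Nonempty → U ⊆ V :=
    fun {U V} hU hV hUc hfr hUV ↦ hUc.subset_of_closure_inter_subset hV hUV
      fun x ⟨hxV, hxU⟩ ↦ by_contra fun hx ↦ by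
        have : x ∈ frontier U := hfr ▸ hV.frontier_eq ▸ ⟨hxV, hx⟩
        exact (hU.frontier_eq ▸ this).2 hxU
  exact (key hU hV hUc hfr hUV).antisymm (key hV hU hVc hfr.symm (inter_comm U V ▸ hUV))

theorem image_eq_of_equiv {α β : Type*} {f : α → β} {A : Set α} {B : Set β} (e : A ≃ B)
    (he : ∀ x : A, (e x : β) = f x) : f '' A = B := by
  have : (fun x : A ↦ f x) = Subtype.val ∘ e := funext fun x ↦ (he x).symm
  rw [image_eq_range, this, e.surjective.range_comp, Subtype.range_coe]

theorem exists_homeomorph_image_of_injOn {X Y : Type*} [TopologicalSpace X] [TopologicalSpace Y]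
    [T2Space Y] {K : Set X} (hK : IsCompact K) {f : X → Y} (hf : ContinuousOn f K)
    (hinj : InjOn f K) : ∃ e : K ≃ₜ f '' K, ∀ x : K, (e x : Y) = f x := by
  have := isCompact_iff_compactSpace.mp hK
  exact ⟨(hf.mapsToRestrict (mapsTo_image f K)).homeoOfEquivCompactToT2
    (f := Equiv.Set.imageOfInjOn f K hinj), fun _ ↦ rfl⟩

/-- if `f` is continuous and injective on a closed topological disk `D₁`,
maps some interior point of `D₁` into the interior of `D₂`, and maps `∂D₁`
homeomorphically onto `∂D₂`, then `f(D₁) = D₂` and `f` restricts to a homeomorphism of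
`D₁` onto `D₂` (in particular `f(D₁) ⊆ D₂`). -/
theorem stmt11 (D₁ D₂ : Set ℂ)
    (hD₁ : IsClosedTopologicalDisk D₁) (hD₂ : IsClosedTopologicalDisk D₂)
    (f : ℂ → ℂ) (hf : ContinuousOn f D₁) (hinj : Set.InjOn f D₁)
    (hint : ∃ x ∈ interior D₁, f x ∈ interior D₂)
    (hbd : ∃ e : frontier D₁ ≃ₜ frontier D₂, ∀ x : frontier D₁, (e x : ℂ) = f x) :
    f '' D₁ = D₂ ∧ ∃ e : D₁ ≃ₜ D₂, ∀ x : D₁, (e x : ℂ) = f x := by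
  obtain ⟨e, he⟩ := hbd
  obtain ⟨x₀, hx₀, hfx₀⟩ := hint
  have hclosure : closure (f '' interior D₁) = f '' D₁ :=
    closure_image_eq_image_of_closure_eq hD₁.isCompact hD₁.closure_interior hf
  have hopen : IsOpen (f '' interior D₁) :=
    isOpen_image_of_continuousOn_of_injOn isOpen_interior (hf.mono interior_subset)
      (hinj.mono interior_subset)
  have hfrontier : frontier (f '' interior D₁) = frontier (interior D₂) := by
    rw [hopen.frontier_eq, isOpen_interior.frontier_eq, hclosure, hD₂.closure_interior,
      ← hinj.image_sdiff_subset interior_subset, ← hD₁.isCompact.isClosed.frontier_eq,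
      ← hD₂.isCompact.isClosed.frontier_eq, image_eq_of_equiv e.toEquiv he]
  have hinterior : f '' interior D₁ = interior D₂ :=
    hopen.eq_of_frontier_eq isOpen_interior (hD₁.isPreconnected_interior.image f
      (hf.mono interior_subset)) hD₂.isPreconnected_interior hfrontier
      ⟨f x₀, mem_image_of_mem f hx₀, hfx₀⟩
  have himage : f '' D₁ = D₂ := by
    rw [← hclosure, hinterior, hD₂.closure_interior]
  obtain ⟨e, he⟩ := exists_homeomorph_image_of_injOn hD₁.isCompact hf hinj
  exact ⟨himage, e.trans (Homeomorph.setCongr himage), he⟩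
end
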